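/- Let 𝔊₃ be the 7-dimensional real Lie algebra with basis (X₁,X₂,X₃,X₄,X₅,X,Y) and nonzero brackets [X₁,X₂]=X₄, [X₁,X₃]=X₅, [X,X₂]=X₂, [X,X₄]=X₄, [Y,X₃]=X₃, [Y,X₅]=X₅. For every U = x₁X₁+x₂X₂+x₃X₃+x₄X₄+x₅X₅+xX+yY ∈ 𝔊₃ (x₁,...,x₅,x,y ∈ ℝ), the characteristic polynomial of the adjoint endomorphism ad_U : T ↦ [U,T] equals T³·(T−x)²·(T−y)². In particular, all complex eigenvalues of ad_U are real for every U ∈ 𝔊₃. -/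
import Mathlib


noncomputable section

/-- Half of the structure constants of the Lie algebra 𝔊₃ (indices `0,…,4` are
`X₁,…,X₅`, index `5` is `X`, index `6` is `Y`). -/
def g3half (i j : Fin 7) : Fin 7 → ℝ :=
  if i = 0 ∧ j = 1 then Pi.single 3 1      -- [X₁,X₂] = X₄
  else if i = 0 ∧ j = 2 then Pi.single 4 1 -- [X₁,X₃] = X₅
  else if i = 5 ∧ j = 1 then Pi.single 1 1 -- [X,X₂] = X₂
  else if i = 5 ∧ j = 3 then Pi.single 3 1 -- [X,X₄] = X₄
  else if i = 6 ∧ j = 2 then Pi.single 2 1 -- [Y,X₃] = X₃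
  else if i = 6 ∧ j = 4 then Pi.single 4 1 -- [Y,X₅] = X₅
  else 0

/-- The bracket `[Xᵢ, Xⱼ]` (in coordinates) of basis vectors of 𝔊₃. -/
def g3br (i j : Fin 7) : Fin 7 → ℝ := g3half i j - g3half j i

/-- The matrix (in the given basis) of the adjoint endomorphism `ad_U : T ↦ [U,T]`
of 𝔊₃, where `u` is the coordinate vector of `U`, so `U = ∑ uᵢ Xᵢ + u₅ X + u₆ Y`. -/
def adG3 (u : Fin 7 → ℝ) : Matrix (Fin 7) (Fin 7) ℝ :=
  Matrix.of fun k j => ∑ i, u i * g3br i j k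


/-- Reordering of the basis making `ad_U` lower triangular. -/
def eperm : Fin 7 ≃ Fin 7 where
  toFun i := if i = 0 then 4 else if i = 1 then 3 else if i = 2 then 2
    else if i = 3 then 1 else if i = 4 then 6 else if i = 5 then 5 else 0
  invFun i := if i = 0 then 6 else if i = 1 then 3 else if i = 2 then 2
    else if i = 3 then 1 else if i = 4 then 0 else if i = 5 then 5 else 4
  left_inv := by decide
  right_inv := by decide

set_option maxHeartbeats 1000000 in
lemma adG3_blockTriangular (u : Fin 7 → ℝ) :
    ((adG3 u).submatrix eperm eperm).BlockTriangular id := by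
  intro i j h
  fin_cases i <;> fin_cases j <;>
    simp_all [adG3, g3br, g3half, eperm, Fin.sum_univ_seven, Pi.single_apply]

open Polynomial in
set_option maxHeartbeats 1000000 in
lemma charpoly_adG3 (u : Fin 7 → ℝ) :
    (adG3 u).charpoly = X ^ 3 * (X - C (u 5)) ^ 2 * (X - C (u 6)) ^ 2 := by
  have h1 : (adG3 u).charpoly = ((adG3 u).submatrix eperm eperm).charpoly := by
    rw [← Matrix.charpoly_reindex eperm.symm (adG3 u)]
    congr 1
  rw [h1, Matrix.charpoly_of_upperTriangular _ (adG3_blockTriangular u),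
    Fin.prod_univ_seven]
  have e0 : ((adG3 u).submatrix eperm eperm) 0 0 = u 6 := by
    simp [adG3, g3br, g3half, eperm, Fin.sum_univ_seven, Pi.single_apply]
  have e1 : ((adG3 u).submatrix eperm eperm) 1 1 = u 5 := by
    simp [adG3, g3br, g3half, eperm, Fin.sum_univ_seven, Pi.single_apply]
  have e2 : ((adG3 u).submatrix eperm eperm) 2 2 = u 6 := by
    simp [adG3, g3br, g3half, eperm, Fin.sum_univ_seven, Pi.single_apply]
  have e3 : ((adG3 u).submatrix eperm eperm) 3 3 = u 5 := by
    simp [adG3, g3br, g3half, eperm, Fin.sum_univ_seven, Pi.single_apply]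
  have e4 : ((adG3 u).submatrix eperm eperm) 4 4 = 0 := by
    simp [adG3, g3br, g3half, eperm, Fin.sum_univ_seven, Pi.single_apply]
  have e5 : ((adG3 u).submatrix eperm eperm) 5 5 = 0 := by
    simp [adG3, g3br, g3half, eperm, Fin.sum_univ_seven, Pi.single_apply]
  have e6 : ((adG3 u).submatrix eperm eperm) 6 6 = 0 := by
    simp [adG3, g3br, g3half, eperm, Fin.sum_univ_seven, Pi.single_apply]
  rw [e0, e1, e2, e3, e4, e5, e6]
  simp only [map_zero, sub_zero]
  ring

open Polynomial in
/-- For every `U = x₁X₁+⋯+x₅X₅+xX+yY ∈ 𝔊₃`, the characteristic polynomial of `ad_U`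
is `T³(T−x)²(T−y)²`; in particular all complex eigenvalues of `ad_U` are real. -/
theorem charpoly_ad_G3 (u : Fin 7 → ℝ) :
    (adG3 u).charpoly = X ^ 3 * (X - C (u 5)) ^ 2 * (X - C (u 6)) ^ 2 ∧
    ∀ z : ℂ, Module.End.HasEigenvalue
        (Matrix.toLin' ((adG3 u).map (fun r : ℝ => (r : ℂ)))) z → z.im = 0 := by
  refine ⟨charpoly_adG3 u, fun z hz => ?_⟩
  set A : Matrix (Fin 7) (Fin 7) ℂ := (adG3 u).map (fun r : ℝ => (r : ℂ))
  set f := Matrix.toLin' A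
  have hmin : (minpoly ℂ f).IsRoot z := Module.End.hasEigenvalue_iff_isRoot.mp hz
  have hdvd : minpoly ℂ f ∣ f.charpoly :=
    minpoly.dvd ℂ f (LinearMap.aeval_self_charpoly f)
  have hfc : f.charpoly = A.charpoly := by
    rw [← LinearMap.charpoly_toMatrix f (Pi.basisFun ℂ (Fin 7)),
      LinearMap.toMatrix_eq_toMatrix', LinearMap.toMatrix'_toLin']
  have hAc : A.charpoly = ((adG3 u).charpoly).map (algebraMap ℝ ℂ) := by
    rw [← Matrix.charpoly_map]; rfl
  have hroot : (A.charpoly).IsRoot z := hmin.dvd (hfc ▸ hdvd)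
  rw [hAc, charpoly_adG3 u] at hroot
  have : (z ^ 3) * (z - (u 5 : ℂ)) ^ 2 * (z - (u 6 : ℂ)) ^ 2 = 0 := by
    simpa [Polynomial.IsRoot, Polynomial.eval_mul, Polynomial.eval_pow] using hroot
  rcases mul_eq_zero.mp this with h | h
  · rcases mul_eq_zero.mp h with h | h
    · have : z = 0 := pow_eq_zero_iff (n := 3) (by norm_num) |>.mp h
      simp [this]
    · have hz5 : z = (u 5 : ℂ) :=
        sub_eq_zero.mp (pow_eq_zero_iff (n := 2) (by norm_num) |>.mp h)
      simp [hz5]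
  · have hz6 : z = (u 6 : ℂ) :=
      sub_eq_zero.mp (pow_eq_zero_iff (n := 2) (by norm_num) |>.mp h)
    simp [hz6]

end
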